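/- For a greedy selection maximizing a monotone submodular function f with f(∅) = 0 over a ground set, the set R of size r obtained by iteratively adding the element with maximal marginal gain satisfies f(R) ≥ (1 - 1/e)·max_{|S|=r} f(S). -/

import Mathlib

/-!
If `S` has `k` elements and `A` is any set, submodularity and monotonicity give
`f S - f A ≤ ∑_{y ∈ S} (f (A ∪ {y}) - f A) ≤ k · (best marginal gain at A)`, so each greedy step
closes at least a `1/k` fraction of the gap `f S - f A`. After `k` steps the gap has shrunk by
`(1 - 1/k)^k ≤ 1/e`.
-/

open Finset

section Submodular

variable {X : Type*} [DecidableEq X] {f : Finset X → ℝ}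

theorem sub_le_sum_marginal
    (hsub : ∀ A B : Finset X, A ⊆ B → ∀ x ∉ B, f (insert x A) - f A ≥ f (insert x B) - f B)
    (A T : Finset X) : f (A ∪ T) - f A ≤ ∑ x ∈ T, (f (insert x A) - f A) := by
  induction T using Finset.induction_on with
  | empty => simp
  | @insert a T ha ih =>
    rw [sum_insert ha, union_insert]
    have hstep : f (insert a (A ∪ T)) - f (A ∪ T) ≤ f (insert a A) - f A := by
      by_cases haA : a ∈ A
      · simp [haA, mem_union]
      · exact hsub A (A ∪ T) subset_union_left a (by simp [haA, ha])
    linarith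

theorem sub_le_card_mul_greedy_gain
    (hmono : ∀ A B : Finset X, A ⊆ B → f A ≤ f B)
    (hsub : ∀ A B : Finset X, A ⊆ B → ∀ x ∉ B, f (insert x A) - f A ≥ f (insert x B) - f B)
    {A S : Finset X} {x : X} (hx : ∀ y, f (insert y A) ≤ f (insert x A)) :
    f S - f A ≤ #S * (f (insert x A) - f A) := by
  calc f S - f A ≤ f (A ∪ S) - f A := by linarith [hmono S (A ∪ S) subset_union_right]
    _ ≤ ∑ y ∈ S, (f (insert y A) - f A) := sub_le_sum_marginal hsub A S
    _ ≤ ∑ _y ∈ S, (f (insert x A) - f A) := sum_le_sum fun y _ => by linarith [hx y]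
    _ = #S * (f (insert x A) - f A) := by rw [sum_const, nsmul_eq_mul]

theorem sub_greedy_le_one_sub_inv_card_mul
    (hmono : ∀ A B : Finset X, A ⊆ B → f A ≤ f B)
    (hsub : ∀ A B : Finset X, A ⊆ B → ∀ x ∉ B, f (insert x A) - f A ≥ f (insert x B) - f B)
    {A S : Finset X} {x : X} (hx : ∀ y, f (insert y A) ≤ f (insert x A)) (hS : 0 < #S) :
    f S - f (insert x A) ≤ (1 - 1 / #S) * (f S - f A) := by
  have hk : (0 : ℝ) < #S := by exact_mod_cast hS
  have hgain : (f S - f A) / #S ≤ f (insert x A) - f A := by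
    rw [div_le_iff₀ hk, mul_comm]
    exact sub_le_card_mul_greedy_gain hmono hsub hx
  calc f S - f (insert x A) = (f S - f A) - (f (insert x A) - f A) := by ring
    _ ≤ (f S - f A) - (f S - f A) / #S := by linarith
    _ = (1 - 1 / #S) * (f S - f A) := by ring

end Submodular

theorem le_pow_mul_of_le_mul {a : ℕ → ℝ} {c : ℝ} (hc : 0 ≤ c) {r : ℕ}
    (h : ∀ s < r, a (s + 1) ≤ c * a s) : ∀ s ≤ r, a s ≤ c ^ s * a 0 := by
  intro s hs
  induction s with
  | zero => simp
  | succ s ih =>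
    calc a (s + 1) ≤ c * a s := h s hs
      _ ≤ c * (c ^ s * a 0) := mul_le_mul_of_nonneg_left (ih (by omega)) hc
      _ = c ^ (s + 1) * a 0 := by ring

theorem stmt_17_general {X : Type*} [DecidableEq X]
    (f : Finset X → ℝ)
    (hmono : ∀ A B : Finset X, A ⊆ B → f A ≤ f B)
    (hsub : ∀ A B : Finset X, A ⊆ B → ∀ x ∉ B,
      f (insert x A) - f A ≥ f (insert x B) - f B)
    (hnonneg : ∀ A : Finset X, 0 ≤ f A)
    (r : ℕ) (R : ℕ → Finset X) (hR0 : R 0 = ∅)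
    (hgreedy : ∀ s < r, ∃ x : X, R (s + 1) = insert x (R s) ∧
      ∀ y : X, f (insert y (R s)) ≤ f (insert x (R s))) :
    ∀ S : Finset X, S.card = r → f (R r) ≥ (1 - 1 / Real.exp 1) * f S := by
  intro S hS
  obtain rfl | hr := Nat.eq_zero_or_pos r
  · rw [card_eq_zero.mp hS, hR0]
    have : 0 < 1 / Real.exp 1 := by positivity
    nlinarith [hnonneg ∅]
  have hc : (0 : ℝ) ≤ 1 - 1 / r := by
    rw [sub_nonneg, div_le_one (by positivity)]
    exact_mod_cast hr
  have hstep : ∀ s < r, f S - f (R (s + 1)) ≤ (1 - 1 / r) * (f S - f (R s)) := by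
    intro s hs
    obtain ⟨x, hRx, hx⟩ := hgreedy s hs
    rw [hRx, ← hS]
    exact sub_greedy_le_one_sub_inv_card_mul hmono hsub hx (by omega)
  have hgap := le_pow_mul_of_le_mul (a := fun s => f S - f (R s)) hc hstep r le_rfl
  have hdecay : (1 - 1 / (r : ℝ)) ^ r ≤ 1 / Real.exp 1 := by
    rw [one_div (Real.exp 1), ← Real.exp_neg]
    exact Real.one_sub_div_pow_le_exp_neg (by exact_mod_cast hr)
  simp only [hR0] at hgap
  nlinarith [hnonneg S, hnonneg ∅, pow_nonneg hc r]

theorem stmt_17 {X : Type*} [Fintype X] [DecidableEq X]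
    (f : Finset X → ℝ)
    (hmono : ∀ A B : Finset X, A ⊆ B → f A ≤ f B)
    (hsub : ∀ A B : Finset X, A ⊆ B → ∀ x ∉ B,
      f (insert x A) - f A ≥ f (insert x B) - f B)
    (hnonneg : ∀ A : Finset X, 0 ≤ f A)
    (hempty : f ∅ = 0)
    (r : ℕ) (R : ℕ → Finset X) (hR0 : R 0 = ∅)
    (hgreedy : ∀ s < r, ∃ x : X, R (s + 1) = insert x (R s) ∧
      ∀ y : X, f (insert y (R s)) ≤ f (insert x (R s))) :
    ∀ S : Finset X, S.card = r → f (R r) ≥ (1 - 1 / Real.exp 1) * f S :=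
  stmt_17_general f hmono hsub hnonneg r R hR0 hgreedy
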